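/- Let σ be an n-cycle on {1,...,n}. Every quandle endomorphism f of P_n^σ is determined by the pair (f(0), f(1)); moreover if f(0) ≠ 0 and f is not the zero map, then f(1) = f(2) = ... = f(n). -/

import Mathlib

/-- The operation of `P_n^σ` on `{0,1,...,n}`: `x*y = x` if `y ≠ 0`, `x*0 = σ x`
(with `σ` a permutation fixing `0`, encoding a permutation of `{1,...,n}`). -/
def pOp {n : ℕ} (σ : Equiv.Perm (Fin (n + 1))) (x y : Fin (n + 1)) : Fin (n + 1) :=
  if y = 0 then σ x else x

/-!
An endomorphism `f` satisfies `f (σ x) = f (x * 0) = f x * f 0`, so `f` conjugates `σ` to right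
multiplication by `f 0`, which is `σ` if `f 0 = 0` and the identity otherwise. Since `σ` is
transitive on `{1,...,n}`, the values of `f` there are the iterates of right multiplication by
`f 0` applied to `f 1`.
-/

lemma Equiv.Perm.IsCycle.exists_pow_apply_eq {α : Type*} [Finite α] {σ : Equiv.Perm α}
    (hσ : σ.IsCycle) {x y : α} (hx : σ x ≠ x) (hy : σ y ≠ y) : ∃ k : ℕ, (σ ^ k) x = y :=
  (hσ.sameCycle hx hy).exists_nat_pow_eq

section

variable {n : ℕ} {σ : Equiv.Perm (Fin (n + 1))} {f : Fin (n + 1) → Fin (n + 1)}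

lemma pOp_zero_right (x : Fin (n + 1)) : pOp σ x 0 = σ x := if_pos rfl

lemma pOp_of_ne_zero {y : Fin (n + 1)} (hy : y ≠ 0) : (pOp σ · y) = id :=
  funext fun _ => if_neg hy

lemma semiconj_pOp_of_map_pOp (hf : ∀ x y, f (pOp σ x y) = pOp σ (f x) (f y)) :
    Function.Semiconj f σ (pOp σ · (f 0)) := fun x => by
  rw [← pOp_zero_right, hf]

lemma map_pow_apply_of_map_pOp (hf : ∀ x y, f (pOp σ x y) = pOp σ (f x) (f y)) (k : ℕ)
    (x : Fin (n + 1)) : f ((σ ^ k) x) = (pOp σ · (f 0))^[k] (f x) :=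
  (semiconj_pOp_of_map_pOp hf).iterate_right k x

end

theorem endo_determined_general {n : ℕ} (hn : 1 ≤ n)
    (σ : Equiv.Perm (Fin (n + 1)))
    (hcyc : σ.IsCycle) (hmove : ∀ x : Fin (n + 1), x ≠ 0 → σ x ≠ x) :
    (∀ f g : Fin (n + 1) → Fin (n + 1),
        (∀ x y, f (pOp σ x y) = pOp σ (f x) (f y)) →
        (∀ x y, g (pOp σ x y) = pOp σ (g x) (g y)) →
        f 0 = g 0 → f 1 = g 1 → f = g) ∧
    (∀ f : Fin (n + 1) → Fin (n + 1),
        (∀ x y, f (pOp σ x y) = pOp σ (f x) (f y)) →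
        f 0 ≠ 0 → (∃ x, f x ≠ 0) →
        ∀ x y : Fin (n + 1), x ≠ 0 → y ≠ 0 → f x = f y) := by
  have reach : ∀ x y : Fin (n + 1), x ≠ 0 → y ≠ 0 → ∃ k : ℕ, (σ ^ k) x = y :=
    fun x y hx hy => hcyc.exists_pow_apply_eq (hmove x hx) (hmove y hy)
  refine ⟨fun f g hf hg h0 h1 => funext fun x => ?_, fun f hf hf0 _ x y hx hy => ?_⟩
  · obtain rfl | hx := eq_or_ne x 0
    · exact h0
    obtain ⟨k, rfl⟩ := reach 1 x (Fin.one_eq_zero_iff.not.mpr (by omega)) hx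
    rw [map_pow_apply_of_map_pOp hf, map_pow_apply_of_map_pOp hg, h0, h1]
  · obtain ⟨k, rfl⟩ := reach x y hx hy
    rw [map_pow_apply_of_map_pOp hf, pOp_of_ne_zero hf0, Function.iterate_id, id]

/-- For an `n`-cycle `σ` on `{1,...,n}`, every quandle endomorphism of `P_n^σ` is
determined by the pair `(f 0, f 1)`; and if `f 0 ≠ 0` and `f` is not the zero map,
then `f` is constant on `{1,...,n}`. -/
theorem endo_determined {n : ℕ} (hn : 1 ≤ n)
    (σ : Equiv.Perm (Fin (n + 1))) (hσ0 : σ 0 = 0)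
    (hcyc : σ.IsCycle) (hmove : ∀ x : Fin (n + 1), x ≠ 0 → σ x ≠ x) :
    (∀ f g : Fin (n + 1) → Fin (n + 1),
        (∀ x y, f (pOp σ x y) = pOp σ (f x) (f y)) →
        (∀ x y, g (pOp σ x y) = pOp σ (g x) (g y)) →
        f 0 = g 0 → f 1 = g 1 → f = g) ∧
    (∀ f : Fin (n + 1) → Fin (n + 1),
        (∀ x y, f (pOp σ x y) = pOp σ (f x) (f y)) →
        f 0 ≠ 0 → (∃ x, f x ≠ 0) →
        ∀ x y : Fin (n + 1), x ≠ 0 → y ≠ 0 → f x = f y) :=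
  endo_determined_general hn σ hcyc hmove
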